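/- arXiv:2002.09028 — 7 statements merged into one kernel-verified Lean document; each statement's English description precedes it below -/
import Mathlib

section
/- Let G be a finite simple graph, X a set of vertices of G, r a natural number, and x, y two vertices not in X with equal r-projection profiles onto X, i.e. π^r_{G,X}[x] = π^r_{G,X}[y]. Then for every v ∈ X and every natural number d ≤ r, there is a walk of length at most d from x to v in G if and only if there is a walk of length at most d from y to v in G. In particular N^d_G[x] ∩ X = N^d_G[y] ∩ X for every d ≤ r. -/
/-!
Any walk from `x ∉ X` to `v ∈ X` of length at most `d ≤ r` first enters `X` at some `v'`, and
its segment up to `v'` is `X`-avoiding. So the profile of `x` at `v'` is at most the length of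
that segment, hence so is the profile of `y`; replacing the segment by an `X`-avoiding walk
from `y` to `v'` gives a walk from `y` to `v` of length at most `d`.
-/

def SimpleGraph.Walk.AvoidsInternally {V : Type*} {G : SimpleGraph V} {u v : V}
    (w : G.Walk u v) (X : Set V) : Prop :=
  ∀ x ∈ w.support.tail.dropLast, x ∉ X

noncomputable def avoidDist {V : Type*} (G : SimpleGraph V) (X : Set V) (u v : V) : ℕ∞ :=
  sInf {n : ℕ∞ | ∃ w : G.Walk u v, w.AvoidsInternally X ∧ (w.length : ℕ∞) = n}

noncomputable def projProfile {V : Type*} (G : SimpleGraph V) (X : Set V) (r : ℕ)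
    (u v : V) : ℕ∞ :=
  if avoidDist G X u v ≤ (r : ℕ∞) then avoidDist G X u v else ⊤

namespace SimpleGraph

variable {V : Type*} {G : SimpleGraph V} {X : Set V}

namespace Walk

theorem avoidsInternally_cons_nil {u v : V} (h : G.Adj u v) :
    (cons h nil).AvoidsInternally X := by
  simp [AvoidsInternally]

theorem AvoidsInternally.cons {u v w : V} {h : G.Adj u v} {p : G.Walk v w}
    (hv : v ∉ X) (hp : p.AvoidsInternally X) : (cons h p).AvoidsInternally X := by
  cases p with
  | nil => exact avoidsInternally_cons_nil h
  | cons h' q =>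
    intro t ht
    rw [support_cons, List.tail_cons, support_cons, ← q.cons_tail_support,
      List.dropLast_cons_cons, List.mem_cons] at ht
    rcases ht with rfl | ht
    · exact hv
    · exact hp t (by rwa [support_cons, List.tail_cons, ← q.cons_tail_support])

theorem exists_avoidsInternally_append {x v : V} (w : G.Walk x v) (hx : x ∉ X) (hv : v ∈ X) :
    ∃ v' ∈ X, ∃ (p : G.Walk x v') (q : G.Walk v' v),
      p.AvoidsInternally X ∧ p.length + q.length = w.length := by
  induction w with
  | nil => exact absurd hv hx
  | @cons a b c h p ih =>
    by_cases hb : b ∈ X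
    · exact ⟨b, hb, .cons h .nil, p, avoidsInternally_cons_nil h, by simp [Nat.add_comm]⟩
    · obtain ⟨v', hv', p', q, hp', hlen⟩ := ih hb hv
      exact ⟨v', hv', .cons h p', q, hp'.cons hb, by simp [← hlen]; omega⟩

end Walk

theorem exists_walk_length_le_comm {u v : V} {d : ℕ} :
    (∃ w : G.Walk u v, w.length ≤ d) ↔ ∃ w : G.Walk v u, w.length ≤ d :=
  ⟨fun ⟨w, hw⟩ => ⟨w.reverse, by simpa using hw⟩, fun ⟨w, hw⟩ => ⟨w.reverse, by simpa using hw⟩⟩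

end SimpleGraph

open SimpleGraph

section

variable {V : Type*} {G : SimpleGraph V} {X : Set V} {u v : V}

theorem avoidDist_le_length (w : G.Walk u v) (hw : w.AvoidsInternally X) :
    avoidDist G X u v ≤ w.length :=
  sInf_le ⟨w, hw, rfl⟩

theorem exists_walk_length_eq_avoidDist (h : avoidDist G X u v ≠ ⊤) :
    ∃ w : G.Walk u v, w.AvoidsInternally X ∧ (w.length : ℕ∞) = avoidDist G X u v := by
  have hne : {n : ℕ∞ | ∃ w : G.Walk u v, w.AvoidsInternally X ∧ (w.length : ℕ∞) = n}.Nonempty :=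
    Set.nonempty_iff_ne_empty.mpr fun he => h (by rw [avoidDist, he, sInf_empty])
  exact csInf_mem hne

theorem avoidDist_le_iff {n : ℕ} :
    avoidDist G X u v ≤ n ↔ ∃ w : G.Walk u v, w.AvoidsInternally X ∧ w.length ≤ n := by
  refine ⟨fun h => ?_, fun ⟨w, hw, hlen⟩ => (avoidDist_le_length w hw).trans (by exact_mod_cast hlen)⟩
  obtain ⟨w, hw, hlen⟩ := exists_walk_length_eq_avoidDist (ne_top_of_le_ne_top (by simp) h)
  exact ⟨w, hw, by exact_mod_cast hlen ▸ h⟩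

theorem projProfile_le_iff {r n : ℕ} (hn : n ≤ r) :
    projProfile G X r u v ≤ n ↔ avoidDist G X u v ≤ n := by
  unfold projProfile
  split_ifs with hr
  · rfl
  · exact ⟨fun h => absurd h (by simp), fun h => absurd (h.trans (by exact_mod_cast hn)) hr⟩

end

theorem exists_walk_length_le_of_projProfile_eq {V : Type*} {G : SimpleGraph V} {X : Set V}
    {r : ℕ} {x y : V} (hx : x ∉ X)
    (hprof : ∀ v ∈ X, projProfile G X r x v = projProfile G X r y v)
    {v : V} (hv : v ∈ X) {d : ℕ} (hd : d ≤ r) :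
    (∃ w : G.Walk x v, w.length ≤ d) → ∃ w : G.Walk y v, w.length ≤ d := by
  rintro ⟨w, hw⟩
  obtain ⟨v', hv', p, q, hp, hlen⟩ := w.exists_avoidsInternally_append hx hv
  have hpr : p.length ≤ r := by omega
  have hxv' : projProfile G X r x v' ≤ p.length :=
    (projProfile_le_iff hpr).mpr (avoidDist_le_length p hp)
  obtain ⟨p', -, hp'⟩ := avoidDist_le_iff.mp ((projProfile_le_iff hpr).mp (hprof v' hv' ▸ hxv'))
  exact ⟨p'.append q, by rw [Walk.length_append]; omega⟩

theorem equal_profiles_equal_neighbourhoods_general {V : Type*}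
    (G : SimpleGraph V) (X : Set V) (r : ℕ) (x y : V)
    (hx : x ∉ X) (hy : y ∉ X)
    (hprof : ∀ v ∈ X, projProfile G X r x v = projProfile G X r y v) :
    (∀ v ∈ X, ∀ d ≤ r,
      ((∃ w : G.Walk x v, w.length ≤ d) ↔ (∃ w : G.Walk y v, w.length ≤ d))) ∧
    (∀ d ≤ r,
      {u : V | ∃ w : G.Walk u x, w.length ≤ d} ∩ X
        = {u : V | ∃ w : G.Walk u y, w.length ≤ d} ∩ X) := by
  have reach_iff : ∀ v ∈ X, ∀ d ≤ r,
      (∃ w : G.Walk x v, w.length ≤ d) ↔ (∃ w : G.Walk y v, w.length ≤ d) :=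
    fun v hv d hd =>
      ⟨exists_walk_length_le_of_projProfile_eq hx hprof hv hd,
        exists_walk_length_le_of_projProfile_eq hy (fun v hv => (hprof v hv).symm) hv hd⟩
  refine ⟨reach_iff, fun d hd => Set.ext fun u => ?_⟩
  simp only [Set.mem_inter_iff, Set.mem_ofPred_eq, exists_walk_length_le_comm (u := u)]
  exact and_congr_left fun hu => reach_iff u hu d hd

/-- If `x, y ∉ X` have equal `r`-projection profiles onto `X`, then for
every `v ∈ X` and every `d ≤ r` there is a walk of length at most `d` from `x` to `v`
iff there is one from `y` to `v`; in particular `N^d_G[x] ∩ X = N^d_G[y] ∩ X`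
for every `d ≤ r`. -/
theorem equal_profiles_equal_neighbourhoods {V : Type*} [Fintype V]
    (G : SimpleGraph V) (X : Set V) (r : ℕ) (x y : V)
    (hx : x ∉ X) (hy : y ∉ X)
    (hprof : ∀ v ∈ X, projProfile G X r x v = projProfile G X r y v) :
    (∀ v ∈ X, ∀ d ≤ r,
      ((∃ w : G.Walk x v, w.length ≤ d) ↔ (∃ w : G.Walk y v, w.length ≤ d))) ∧
    (∀ d ≤ r,
      {u : V | ∃ w : G.Walk u x, w.length ≤ d} ∩ X
        = {u : V | ∃ w : G.Walk u y, w.length ≤ d} ∩ X) :=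
  equal_profiles_equal_neighbourhoods_general G X r x y hx hy hprof
end

section
/- Let G be a finite simple graph, r a natural number, and R, C disjoint sets of vertices of G such that: (i) for every vertex u ∉ R, at most one element of C admits a walk of length at most 2r to u in the graph G − R (i.e. C is 2r-scattered in G − R); and (ii) all elements of C have the same r-projection profile onto R. If a vertex s of G is within distance r (in G) of two distinct elements of C, then s is within distance r (in G) of every element of C. -/
namespace SimpleGraph

variable {V : Type*} {G : SimpleGraph V} {X : Set V}

theorem Walk.avoidsInternally_of_dropLast {u v : V} (w : G.Walk u v)
    (hw : ∀ x ∈ w.support.dropLast, x ∉ X) : w.AvoidsInternally X := by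
  intro x hx
  rw [← List.tail_dropLast] at hx
  exact hw x (List.mem_of_mem_tail hx)

theorem Walk.exists_split_at_first_mem {u v : V} (w : G.Walk u v)
    (hmeet : ∃ x ∈ w.support, x ∈ X) :
    ∃ x ∈ X, ∃ (p : G.Walk u x) (q : G.Walk x v),
      p.length + q.length = w.length ∧ ∀ y ∈ p.support.dropLast, y ∉ X := by
  induction w with
  | nil =>
    obtain ⟨x, hx, hxX⟩ := hmeet
    rw [Walk.support_nil, List.mem_singleton] at hx
    subst hx
    exact ⟨x, hxX, .nil, .nil, rfl, by simp⟩
  | @cons a b c hab w ih =>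
    by_cases haX : a ∈ X
    · exact ⟨a, haX, .nil, .cons hab w, by simp, by simp⟩
    obtain ⟨x, hx, hxX⟩ := hmeet
    have hx' : x ∈ w.support := by
      rcases List.mem_cons.1 (Walk.support_cons hab w ▸ hx) with rfl | hx'
      · exact absurd hxX haX
      · exact hx'
    obtain ⟨y, hyX, p, q, hlen, hp⟩ := ih ⟨x, hx', hxX⟩
    refine ⟨y, hyX, .cons hab p, q, by simp only [Walk.length_cons]; omega, ?_⟩
    rw [Walk.support_cons, List.dropLast_cons_of_ne_nil p.support_ne_nil]
    intro z hz
    rcases List.mem_cons.1 hz with rfl | hz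
    · exact haX
    · exact hp z hz

theorem avoidDist_le_length {u v : V} (w : G.Walk u v) (hw : w.AvoidsInternally X) :
    avoidDist G X u v ≤ w.length :=
  sInf_le ⟨w, hw, rfl⟩

theorem exists_walk_of_avoidDist_le {u v : V} {n : ℕ} (h : avoidDist G X u v ≤ n) :
    ∃ w : G.Walk u v, w.AvoidsInternally X ∧ w.length ≤ n := by
  have hne : {m : ℕ∞ | ∃ w : G.Walk u v, w.AvoidsInternally X ∧ (w.length : ℕ∞) = m}.Nonempty := by
    by_contra hemp
    rw [Set.not_nonempty_iff_eq_empty] at hemp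
    rw [avoidDist, hemp, sInf_empty, top_le_iff] at h
    exact ENat.natCast_ne_top n h
  obtain ⟨w, hw, hlen⟩ := csInf_mem hne
  exact ⟨w, hw, by exact_mod_cast hlen.trans_le h⟩

theorem projProfile_le_iff {r n : ℕ} (hn : n ≤ r) {u v : V} :
    projProfile G X r u v ≤ n ↔ avoidDist G X u v ≤ n := by
  unfold projProfile
  split_ifs with hr
  · rfl
  · exact ⟨fun h => absurd h (by simp), fun h => absurd (h.trans (by exact_mod_cast hn)) hr⟩

theorem exists_walk_length_le_of_projProfile_eq {r : ℕ} {s c c' : V}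
    (hprof : ∀ v ∈ X, projProfile G X r c v = projProfile G X r c' v)
    (w : G.Walk s c) (hw : w.length ≤ r) (hmeet : ∃ x ∈ w.support, x ∈ X) :
    ∃ w' : G.Walk s c', w'.length ≤ w.length := by
  obtain ⟨v, hvX, p, q, hlen, hp⟩ := w.reverse.exists_split_at_first_mem (by simpa using hmeet)
  rw [Walk.length_reverse] at hlen
  have hpr : p.length ≤ r := by omega
  have hc : projProfile G X r c v ≤ p.length :=
    (projProfile_le_iff hpr).2 (avoidDist_le_length p (p.avoidsInternally_of_dropLast hp))
  rw [hprof v hvX, projProfile_le_iff hpr] at hc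
  obtain ⟨p', -, hp'⟩ := exists_walk_of_avoidDist_le hc
  exact ⟨(p'.append q).reverse, by simp only [Walk.length_reverse, Walk.length_append]; omega⟩

end SimpleGraph

theorem waterLily_uniformity_general {V : Type*}
    (G : SimpleGraph V) (r : ℕ) (R C : Set V)
    (hscat : ∀ u : V, u ∉ R →
      {c : V | c ∈ C ∧
        ∃ w : G.Walk c u, w.length ≤ 2 * r ∧ ∀ x ∈ w.support, x ∉ R}.Subsingleton)
    (hunif : ∀ c ∈ C, ∀ c' ∈ C, ∀ v ∈ R, projProfile G R r c v = projProfile G R r c' v)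
    (s c₁ c₂ : V) (hc₁ : c₁ ∈ C) (hc₂ : c₂ ∈ C) (hne : c₁ ≠ c₂)
    (h₁ : ∃ w : G.Walk s c₁, w.length ≤ r) (h₂ : ∃ w : G.Walk s c₂, w.length ≤ r) :
    ∀ c ∈ C, ∃ w : G.Walk s c, w.length ≤ r := by
  obtain ⟨w₁, hw₁⟩ := h₁
  obtain ⟨w₂, hw₂⟩ := h₂
  intro c hc
  by_cases hm₁ : ∃ x ∈ w₁.support, x ∈ R
  · obtain ⟨w, hw⟩ := SimpleGraph.exists_walk_length_le_of_projProfile_eq (hunif c₁ hc₁ c hc)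
      w₁ hw₁ hm₁
    exact ⟨w, hw.trans hw₁⟩
  by_cases hm₂ : ∃ x ∈ w₂.support, x ∈ R
  · obtain ⟨w, hw⟩ := SimpleGraph.exists_walk_length_le_of_projProfile_eq (hunif c₂ hc₂ c hc)
      w₂ hw₂ hm₂
    exact ⟨w, hw.trans hw₂⟩
  push Not at hm₁ hm₂
  refine absurd (hscat s (hm₁ s w₁.start_mem_support) ?_ ?_) hne
  · exact ⟨hc₁, w₁.reverse, by simp only [SimpleGraph.Walk.length_reverse]; omega,
      by simpa using hm₁⟩
  · exact ⟨hc₂, w₂.reverse, by simp only [SimpleGraph.Walk.length_reverse]; omega,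
      by simpa using hm₂⟩

/-- Key uniformity property of a uniform water lily `(R, C)` of radius
`2r` and depth `r`: if `C` is `2r`-scattered in `G − R` (at most one element of `C`
reaches any vertex `u ∉ R` by a walk of length `≤ 2r` avoiding `R` entirely) and all
centres have the same `r`-projection profile onto `R`, then any vertex `s` within
distance `r` (in `G`) of two distinct centres is within distance `r` of every centre. -/
theorem waterLily_uniformity {V : Type*} [Fintype V]
    (G : SimpleGraph V) (r : ℕ) (R C : Set V) (hdisj : Disjoint R C)
    (hscat : ∀ u : V, u ∉ R →
      {c : V | c ∈ C ∧
        ∃ w : G.Walk c u, w.length ≤ 2 * r ∧ ∀ x ∈ w.support, x ∉ R}.Subsingleton)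
    (hunif : ∀ c ∈ C, ∀ c' ∈ C, ∀ v ∈ R, projProfile G R r c v = projProfile G R r c' v)
    (s c₁ c₂ : V) (hc₁ : c₁ ∈ C) (hc₂ : c₂ ∈ C) (hne : c₁ ≠ c₂)
    (h₁ : ∃ w : G.Walk s c₁, w.length ≤ r) (h₂ : ∃ w : G.Walk s c₂, w.length ≤ r) :
    ∀ c ∈ C, ∃ w : G.Walk s c, w.length ≤ r :=
  waterLily_uniformity_general G r R C hscat hunif s c₁ c₂ hc₁ hc₂ hne h₁ h₂
end

section
/- Let G be a finite simple graph, r, λ, μ natural numbers, and R, W, I sets of vertices of G such that |N^r_G[w] ∩ R| ≥ λ for every w ∈ W and |N^r_G[ρ] ∩ I| ≤ μ for every ρ ∈ R. Then λ·|I ∩ W| ≤ μ·|R|. (In particular, if every vertex of the pads of a water lily has at least c roots within distance r, then any (r,c)-scattered set meets the pads in at most |R| vertices, and any set obeying upper constraint μ at the roots meets the pads in at most (μ/λ)·|R| vertices.) -/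
theorem Set.ncard_mul_le_ncard_mul {α β : Type*} (r : α → β → Prop) {s : Set α} {t : Set β}
    {m n : ℕ} (ht : t.Finite) (hm : ∀ a ∈ s, m ≤ {b ∈ t | r a b}.ncard)
    (hn : ∀ b ∈ t, {a ∈ s | r a b}.ncard ≤ n) : s.ncard * m ≤ t.ncard * n := by
  classical
  by_cases hs : s.Finite
  · rw [ncard_eq_toFinset_card s hs, ncard_eq_toFinset_card t ht]
    refine Finset.card_mul_le_card_mul r (fun a ha => ?_) (fun b hb => ?_)
    · rw [← ncard_coe_finset, Finset.coe_bipartiteAbove]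
      simpa only [Finite.mem_toFinset] using hm a (hs.mem_toFinset.1 ha)
    · rw [← ncard_coe_finset, Finset.coe_bipartiteBelow]
      simpa only [Finite.mem_toFinset] using hn b (ht.mem_toFinset.1 hb)
  · simp [Infinite.ncard hs]

theorem SimpleGraph.exists_walk_length_le_comm_s3 {V : Type*} (G : SimpleGraph V) (r : ℕ)
    (u v : V) : (∃ p : G.Walk u v, p.length ≤ r) ↔ ∃ p : G.Walk v u, p.length ≤ r :=
  ⟨fun ⟨p, hp⟩ => ⟨p.reverse, by rwa [Walk.length_reverse]⟩,
    fun ⟨p, hp⟩ => ⟨p.reverse, by rwa [Walk.length_reverse]⟩⟩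

/-- If every `w ∈ W` has at least `λ` elements of `R` within distance
`r`, and every `ρ ∈ R` has at most `μ` elements of `I` within distance `r`, then
`λ·|I ∩ W| ≤ μ·|R|`. -/
theorem counting_scattered_in_pads {V : Type*} [Fintype V]
    (G : SimpleGraph V) (r lam mu : ℕ) (R W I : Set V)
    (hW : ∀ w ∈ W, lam ≤ ({u : V | ∃ p : G.Walk u w, p.length ≤ r} ∩ R).ncard)
    (hR : ∀ ρ ∈ R, ({u : V | ∃ p : G.Walk u ρ, p.length ≤ r} ∩ I).ncard ≤ mu) :
    lam * (I ∩ W).ncard ≤ mu * R.ncard := by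
  rw [mul_comm lam, mul_comm mu]
  refine Set.ncard_mul_le_ncard_mul (fun w ρ => ∃ p : G.Walk ρ w, p.length ≤ r)
    R.toFinite (fun w hw => ?_) (fun ρ hρ => (Set.ncard_le_ncard ?_).trans (hR ρ hρ))
  · have hlam := hW w hw.2
    rwa [Set.inter_comm] at hlam
  · rintro w ⟨⟨hwI, -⟩, hwρ⟩
    exact ⟨(G.exists_walk_length_le_comm_s3 r _ _).1 hwρ, hwI⟩
end

section
/- Let Ĝ be a finite simple graph, L ⊆ V(Ĝ), O = V(Ĝ) ∖ L, r ≥ 1 and k natural numbers. Let G' be obtained from Ĝ by adding new vertices b, a₁, a₂, connecting b to every vertex of O by a path of length r (each such connection using its own r−1 new internal vertices), connecting b to a₁ by a path of length r, and connecting a₁ to a₂ by a path of length r. Then G' has a total r-dominating set of size at most k+2 if and only if there is a set D̂ ⊆ V(Ĝ) of size at most k such that every vertex v ∈ L has some d ∈ D̂ with d ≠ v and d within distance r of v in Ĝ. -/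
/-- Graph obtained from `G` by adding new vertices `B` and, for each `p : P`, a fresh
path of length `len p` from `src p` to `dst p`: the path has `len p - 1` new internal
vertices (the pairs `⟨p, i⟩`); a connection of length `1` is just an edge. -/
def SimpleGraph.addPaths {V : Type*} (G : SimpleGraph V) (B P : Type*)
    (src dst : P → V ⊕ B) (len : P → ℕ) :
    SimpleGraph ((V ⊕ B) ⊕ (Σ p : P, Fin (len p - 1))) :=
  SimpleGraph.fromRel (fun x y =>
    (∃ u w, G.Adj u w ∧ x = .inl (.inl u) ∧ y = .inl (.inl w)) ∨
    (∃ p : P, len p = 1 ∧ x = .inl (src p) ∧ y = .inl (dst p)) ∨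
    (∃ p : P, ∃ i : Fin (len p - 1), (i : ℕ) = 0 ∧ x = .inl (src p) ∧ y = .inr ⟨p, i⟩) ∨
    (∃ p : P, ∃ i j : Fin (len p - 1), (i : ℕ) + 1 = (j : ℕ) ∧ x = .inr ⟨p, i⟩ ∧ y = .inr ⟨p, j⟩) ∨
    (∃ p : P, ∃ i : Fin (len p - 1), (i : ℕ) + 2 = len p ∧ x = .inr ⟨p, i⟩ ∧ y = .inl (dst p)))

/- New end-vertices for statement 7: `b = 0`, `a₁ = 1`, `a₂ = 2` (in `Fin 3`).
Paths (all of length `r`): for each `o ∈ O = Lᶜ` a path from `b` to `o`;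
a path from `b` to `a₁`; and a path from `a₁` to `a₂`. -/

/-- Sources of the added paths. -/
def src7 {V : Type*} [Fintype V] [DecidableEq V] (L : Finset V) :
    ({o : V // o ∈ Lᶜ} ⊕ Fin 2) → V ⊕ Fin 3
  | .inl _ => .inr 0      -- b–o paths start at b
  | .inr j => if j = 0 then .inr 0 else .inr 1  -- b–a₁ and a₁–a₂

/-- Targets of the added paths. -/
def dst7 {V : Type*} [Fintype V] [DecidableEq V] (L : Finset V) :
    ({o : V // o ∈ Lᶜ} ⊕ Fin 2) → V ⊕ Fin 3
  | .inl o => .inl o.1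
  | .inr j => if j = 0 then .inr 1 else .inr 2

/-!
Given `D̂`, the set `D̂ ∪ {b, a₁}` totally `r`-dominates `G'`: `b` covers `O` and the `b`–`o`
paths, `a₁` and `b` cover each other, and `a₁` covers `a₂` and the path leading to it.

Conversely, the dominator `d` of `a₂` and the dominator of `d` lie within distance `2r` of `a₂`,
hence on the gadget formed by `b`, `a₁`, `a₂` and the two paths between them. Collapsing each
`b`–`o` path onto `o` sends the at most `k` remaining vertices of `D'` into `V(Ĝ)`. A vertex of
`L` is at distance more than `r` from the gadget, so a dominating walk of length at most `r`
survives the collapse, and its dominator does not collapse onto it because the `b`–`o` paths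
collapse into `O`.
-/

namespace SimpleGraph

def IsTotallyDominated {W : Type*} (G : SimpleGraph W) (r : ℕ) (D : Set W) (v : W) : Prop :=
  ∃ d ∈ D, d ≠ v ∧ ∃ w : G.Walk d v, w.length ≤ r

section Walks

variable {V W : Type*} {G : SimpleGraph V}

theorem Walk.le_add_length {f : V → ℕ} (hf : ∀ ⦃x y⦄, G.Adj x y → f x ≤ f y + 1) :
    ∀ {x y : V} (w : G.Walk x y), f x ≤ f y + w.length
  | _, _, .nil => le_rfl
  | _, _, .cons h w => by
    have := w.le_add_length hf
    have := hf h
    rw [Walk.length_cons]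
    omega

theorem Walk.exists_walk_of_partialMap {H : SimpleGraph W} {f : V → Option W}
    (hf : ∀ ⦃x y a b⦄, G.Adj x y → f x = some a → f y = some b → a = b ∨ H.Adj a b) :
    ∀ {x y : V} (w : G.Walk x y), (∀ z ∈ w.support, f z ≠ none) →
      ∀ {a b : W}, f x = some a → f y = some b → ∃ w' : H.Walk a b, w'.length ≤ w.length
  | _, _, .nil, _, _, _, ha, hb => by
    obtain rfl : _ = _ := Option.some.inj (ha.symm.trans hb)
    exact ⟨.nil, le_rfl⟩
  | _, _, .cons (v := y) h w, hdom, a, b, ha, hb => by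
    obtain ⟨c, hc⟩ := Option.ne_none_iff_exists'.mp (hdom y (by simp))
    obtain ⟨w', hw'⟩ := w.exists_walk_of_partialMap hf
      (fun z hz => hdom z (List.mem_cons_of_mem _ hz)) hc hb
    rw [Walk.length_cons]
    rcases hf h ha hc with rfl | hac
    · exact ⟨w', by omega⟩
    · exact ⟨.cons hac w', by rw [Walk.length_cons]; omega⟩

end Walks

section AddPaths

variable {V B P : Type*} {G : SimpleGraph V} {src dst : P → V ⊕ B} {len : P → ℕ}

theorem addPaths_rel_of_adj {R : (V ⊕ B) ⊕ (Σ p : P, Fin (len p - 1)) →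
      (V ⊕ B) ⊕ (Σ p : P, Fin (len p - 1)) → Prop} (hR : ∀ x y, R x y → R y x)
    (base : ∀ u w, G.Adj u w → R (.inl (.inl u)) (.inl (.inl w)))
    (short : ∀ p, len p = 1 → R (.inl (src p)) (.inl (dst p)))
    (first : ∀ p (i : Fin (len p - 1)), (i : ℕ) = 0 → R (.inl (src p)) (.inr ⟨p, i⟩))
    (step : ∀ p (i j : Fin (len p - 1)), (i : ℕ) + 1 = j → R (.inr ⟨p, i⟩) (.inr ⟨p, j⟩))
    (last : ∀ p (i : Fin (len p - 1)), (i : ℕ) + 2 = len p → R (.inr ⟨p, i⟩) (.inl (dst p)))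
    {x y} (h : (G.addPaths B P src dst len).Adj x y) : R x y := by
  have hgen : ∀ x y, (∃ u w, G.Adj u w ∧ x = .inl (.inl u) ∧ y = .inl (.inl w)) ∨
      (∃ p, len p = 1 ∧ x = .inl (src p) ∧ y = .inl (dst p)) ∨
      (∃ p, ∃ i : Fin (len p - 1), (i : ℕ) = 0 ∧ x = .inl (src p) ∧ y = .inr ⟨p, i⟩) ∨
      (∃ p, ∃ i j : Fin (len p - 1), (i : ℕ) + 1 = j ∧ x = .inr ⟨p, i⟩ ∧ y = .inr ⟨p, j⟩) ∨
      (∃ p, ∃ i : Fin (len p - 1), (i : ℕ) + 2 = len p ∧ x = .inr ⟨p, i⟩ ∧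
        y = .inl (dst p)) → R x y := by
    rintro x y (⟨u, w, huw, rfl, rfl⟩ | ⟨p, hp, rfl, rfl⟩ | ⟨p, i, hi, rfl, rfl⟩ |
      ⟨p, i, j, hij, rfl, rfl⟩ | ⟨p, i, hi, rfl, rfl⟩)
    exacts [base u w huw, short p hp, first p i hi, step p i j hij, last p i hi]
  obtain ⟨-, h | h⟩ := (fromRel_adj _ _ _).mp h
  exacts [hgen x y h, hR _ _ (hgen y x h)]

def addPathsHom : G →g G.addPaths B P src dst len where
  toFun u := .inl (.inl u)
  map_rel' h := (fromRel_adj _ _ _).mpr ⟨by simp [h.ne], .inl (.inl ⟨_, _, h, rfl, rfl⟩)⟩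

theorem addPaths_exists_walk_src_internal (p : P) (i : Fin (len p - 1)) :
    ∃ w : (G.addPaths B P src dst len).Walk (.inl (src p)) (.inr ⟨p, i⟩),
      w.length = i + 1 := by
  obtain ⟨n, hn⟩ := i
  induction n with
  | zero =>
    exact ⟨.cons ((fromRel_adj _ _ _).mpr
      ⟨by simp, .inl (.inr (.inr (.inl ⟨p, ⟨0, hn⟩, rfl, rfl, rfl⟩)))⟩) .nil, rfl⟩
  | succ n ih =>
    obtain ⟨w, hw⟩ := ih (by omega)
    have hadj : (G.addPaths B P src dst len).Adj (.inr ⟨p, ⟨n, by omega⟩⟩)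
        (.inr ⟨p, ⟨n + 1, hn⟩⟩) :=
      (fromRel_adj _ _ _).mpr ⟨by simp, .inl (.inr (.inr (.inr (.inl
        ⟨p, ⟨n, by omega⟩, ⟨n + 1, hn⟩, rfl, rfl, rfl⟩))))⟩
    exact ⟨w.concat hadj, by rw [Walk.length_concat, hw]⟩

theorem addPaths_exists_walk_src_dst (p : P) (hp : src p ≠ dst p) (hlen : 0 < len p) :
    ∃ w : (G.addPaths B P src dst len).Walk (.inl (src p)) (.inl (dst p)),
      w.length = len p := by
  obtain hlen1 | hlen2 := (Nat.one_le_iff_ne_zero.mpr hlen.ne').eq_or_lt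
  · have hadj : (G.addPaths B P src dst len).Adj (.inl (src p)) (.inl (dst p)) :=
      (fromRel_adj _ _ _).mpr ⟨by simpa using hp, .inl (.inr (.inl ⟨p, hlen1.symm, rfl, rfl⟩))⟩
    exact ⟨hadj.toWalk, hlen1⟩
  · let i : Fin (len p - 1) := ⟨len p - 2, by omega⟩
    obtain ⟨w, hw⟩ := addPaths_exists_walk_src_internal (G := G) (dst := dst) p i
    have hadj : (G.addPaths B P src dst len).Adj (.inr ⟨p, i⟩) (.inl (dst p)) :=
      (fromRel_adj _ _ _).mpr ⟨by simp,
        .inl (.inr (.inr (.inr (.inr ⟨p, i, by simp only [i]; omega, rfl, rfl⟩))))⟩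
    exact ⟨w.concat hadj, by rw [Walk.length_concat, hw]; simp only [i]; omega⟩

end AddPaths

end SimpleGraph

namespace TotalDominationKernel

open SimpleGraph

variable {V : Type*} [Fintype V] [DecidableEq V] (Ghat : SimpleGraph V) (L : Finset V) (r : ℕ)

local notation "V'" => (V ⊕ Fin 3) ⊕ (Σ _p : ({o : V // o ∈ Lᶜ} ⊕ Fin 2), Fin (r - 1))

local notation "G'" =>
  Ghat.addPaths (Fin 3) ({o : V // o ∈ Lᶜ} ⊕ Fin 2) (src7 L) (dst7 L) (fun _ => r)

/-- Collapses each `b`–`o` path onto `o`; the vertices `b`, `a₁`, `a₂` and the paths between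
them lie over no vertex of `Ĝ`. -/
def base : V' → Option V
  | .inl (.inl u) => some u
  | .inr ⟨.inl o, _⟩ => some o
  | _ => none

/- Lower bounds for the distance to the domain of `base` and to `L`, certified by changing by at
most one along each edge. -/

def coreDist : V' → ℕ
  | .inl (.inl _) => 0
  | .inl (.inr j) => j * r + 1
  | .inr ⟨.inl _, _⟩ => 0
  | .inr ⟨.inr j, i⟩ => j * r + i + 2

def distToL : V' → ℕ
  | .inl (.inl u) => if u ∈ L then 0 else 1
  | .inr ⟨.inl _, i⟩ => r - i
  | _ => r + 1

variable {Ghat L r}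

theorem coreDist_le_of_adj ⦃x y : V'⦄ (h : (G').Adj x y) :
    coreDist L r x ≤ coreDist L r y + 1 := by
  refine (addPaths_rel_of_adj
    (R := fun x y => coreDist L r x ≤ coreDist L r y + 1 ∧ coreDist L r y ≤ coreDist L r x + 1)
    (fun _ _ h => h.symm) ?_ ?_ ?_ ?_ ?_ h).1
  · simp [coreDist]
  · rintro (o | j) hr1
    · simp [src7, dst7, coreDist]
    · fin_cases j <;> simp [src7, dst7, coreDist, hr1]
  · rintro (o | j) i hi
    · simp [src7, coreDist]
    · fin_cases j <;> simp [src7, coreDist, hi]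
  · rintro (o | j) i j' hij
    · simp [coreDist]
    · simp only [coreDist]; omega
  · rintro (o | j) i hi
    · simp [dst7, coreDist]
    · fin_cases j <;> simp [dst7, coreDist] <;> omega

theorem distToL_le_of_adj ⦃x y : V'⦄ (h : (G').Adj x y) :
    distToL L r x ≤ distToL L r y + 1 := by
  refine (addPaths_rel_of_adj
    (R := fun x y => distToL L r x ≤ distToL L r y + 1 ∧ distToL L r y ≤ distToL L r x + 1)
    (fun _ _ h => h.symm) ?_ ?_ ?_ ?_ ?_ h).1
  · intro u w _
    simp only [distToL]
    split_ifs <;> omega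
  · rintro (o | j) hr1
    · simp [src7, dst7, distToL, Finset.mem_compl.mp o.2, hr1]
    · fin_cases j <;> simp [src7, dst7, distToL]
  · rintro (o | j) i hi
    · simp [src7, distToL, hi]; omega
    · fin_cases j <;> simp [src7, distToL]
  · rintro (o | j) i j' hij
    · simp only [distToL]; omega
    · simp [distToL]
  · rintro (o | j) i hi
    · simp [dst7, distToL, Finset.mem_compl.mp o.2]; omega
    · fin_cases j <;> simp [dst7, distToL]

theorem base_adj ⦃x y : V'⦄ ⦃a b : V⦄ (h : (G').Adj x y) (ha : base L r x = some a)
    (hb : base L r y = some b) : a = b ∨ Ghat.Adj a b := by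
  refine addPaths_rel_of_adj
    (R := fun x y => ∀ a b, base L r x = some a → base L r y = some b → a = b ∨ Ghat.Adj a b)
    (fun _ _ h a b ha hb => (h b a hb ha).imp Eq.symm Adj.symm) ?_ ?_ ?_ ?_ ?_ h a b ha hb
  · intro u w huw a b ha hb
    simp only [base, Option.some.injEq] at ha hb
    exact .inr (ha ▸ hb ▸ huw)
  · rintro (o | j) - a b ha
    · simp [src7, base] at ha
    · fin_cases j <;> simp [src7, base] at ha
  · rintro (o | j) i - a b ha
    · simp [src7, base] at ha
    · fin_cases j <;> simp [src7, base] at ha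
  · rintro (o | j) i j' - a b ha hb
    · simp only [base, Option.some.injEq] at ha hb
      exact .inl (ha ▸ hb)
    · simp [base] at ha
  · rintro (o | j) i - a b ha hb
    · simp only [base, dst7, Option.some.injEq] at ha hb
      exact .inl (ha ▸ hb)
    · simp [base] at ha

theorem base_eq_none_of_coreDist_pos {x : V'} (hx : 0 < coreDist L r x) : base L r x = none := by
  rcases x with (u | j) | ⟨o | j, i⟩ <;> simp_all [coreDist, base]

theorem base_ne_none_of_distToL_le {x : V'} (hx : distToL L r x ≤ r) : base L r x ≠ none := by
  rcases x with (u | j) | ⟨o | j, i⟩ <;> simp_all [distToL, base]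

theorem eq_inl_of_base_eq {x : V'} {v : V} (hv : v ∈ L) (hx : base L r x = some v) :
    x = .inl (.inl v) := by
  rcases x with (u | j) | ⟨o | j, i⟩ <;> simp only [base, Option.some.injEq, reduceCtorEq] at hx
  · rw [hx]
  · exact absurd (hx ▸ hv) (Finset.mem_compl.mp o.2)

theorem two_le_ncard_inter_base_eq_none {D : Set V'} (hD : ∀ x, (G').IsTotallyDominated r D x) :
    2 ≤ (D ∩ {x | base L r x = none}).ncard := by
  obtain ⟨d, hdD, -, w, hw⟩ := hD (.inl (.inr 2))
  obtain ⟨e, heD, hed, w', hw'⟩ := hD d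
  have hd : coreDist L r (.inl (.inr 2)) ≤ coreDist L r d + r :=
    (w.reverse.le_add_length coreDist_le_of_adj).trans (by simpa using hw)
  have he : coreDist L r d ≤ coreDist L r e + r :=
    (w'.reverse.le_add_length coreDist_le_of_adj).trans (by simpa using hw')
  have ha₂ : coreDist L r (.inl (.inr 2)) = 2 * r + 1 := rfl
  refine (Set.one_lt_ncard (Set.toFinite _)).mpr
    ⟨e, ⟨heD, base_eq_none_of_coreDist_pos ?_⟩, d, ⟨hdD, base_eq_none_of_coreDist_pos ?_⟩, hed⟩
  all_goals omega

theorem isTotallyDominated_base {D : Set V'} (hD : ∀ x, (G').IsTotallyDominated r D x) {v : V}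
    (hv : v ∈ L) :
    Ghat.IsTotallyDominated r (some ⁻¹' (base L r '' (D \ {x | base L r x = none}))) v := by
  obtain ⟨d, hdD, hdv, w, hw⟩ := hD (.inl (.inl v))
  have hv0 : distToL L r (.inl (.inl v)) = 0 := by simp [distToL, hv]
  have hsupp : ∀ z ∈ w.support, base L r z ≠ none := fun z hz => by
    have := (w.dropUntil z hz).le_add_length distToL_le_of_adj
    have := w.length_dropUntil_le_length hz
    exact base_ne_none_of_distToL_le (by omega)
  obtain ⟨u, hu⟩ := Option.ne_none_iff_exists'.mp (hsupp d w.start_mem_support)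
  obtain ⟨w', hw'⟩ := w.exists_walk_of_partialMap base_adj hsupp hu rfl
  refine ⟨u, ⟨d, ⟨hdD, hsupp d w.start_mem_support⟩, hu⟩, ?_, w', hw'.trans hw⟩
  rintro rfl
  exact hdv (eq_inl_of_base_eq hv hu)

theorem exists_dom_of_totalDom {k : ℕ} {D : Set V'} (hcard : D.ncard ≤ k + 2)
    (hD : ∀ x, (G').IsTotallyDominated r D x) :
    ∃ Dhat : Set V, Dhat.ncard ≤ k ∧ ∀ v ∈ L, Ghat.IsTotallyDominated r Dhat v := by
  set S := {x : V' | base L r x = none}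
  refine ⟨_, ?_, fun v hv => isTotallyDominated_base hD hv⟩
  have hS : ∀ y ∈ base L r '' (D \ S), y ∈ Set.range some := by
    rintro _ ⟨x, ⟨-, hx⟩, rfl⟩
    exact Option.ne_none_iff_exists.mp hx
  calc (some ⁻¹' (base L r '' (D \ S))).ncard
      = (base L r '' (D \ S)).ncard := Set.ncard_preimage_of_injective_subset_range
          (Option.some_injective _) hS
    _ ≤ (D \ S).ncard := Set.ncard_image_le (Set.toFinite _)
    _ ≤ k := by
      have := Set.ncard_inter_add_ncard_sdiff_eq_ncard D S
      have : 2 ≤ (D ∩ S).ncard := two_le_ncard_inter_base_eq_none hD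
      omega

variable (L r) in
def liftDom (Dhat : Set V) : Set V' :=
  insert (.inl (.inr 0)) (insert (.inl (.inr 1)) ((fun u => .inl (.inl u)) '' Dhat))

theorem ncard_liftDom_le (Dhat : Set V) : (liftDom L r Dhat).ncard ≤ Dhat.ncard + 2 := by
  unfold liftDom
  grw [Set.ncard_insert_le, Set.ncard_insert_le, Set.ncard_image_le (Set.toFinite Dhat)]

theorem src7_mem_liftDom (Dhat : Set V) (p : {o : V // o ∈ Lᶜ} ⊕ Fin 2) :
    (.inl (src7 L p) : V') ∈ liftDom L r Dhat := by
  rcases p with o | j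
  · exact Set.mem_insert _ _
  · fin_cases j
    exacts [Set.mem_insert _ _, Set.mem_insert_of_mem _ (Set.mem_insert _ _)]

theorem exists_walk_along (hr : 1 ≤ r) (p : {o : V // o ∈ Lᶜ} ⊕ Fin 2) :
    ∃ w : (G').Walk (.inl (src7 L p)) (.inl (dst7 L p)), w.length = r := by
  refine addPaths_exists_walk_src_dst p ?_ hr
  rcases p with o | j
  · simp [src7, dst7]
  · fin_cases j <;> simp [src7, dst7]

theorem isTotallyDominated_liftDom (hr : 1 ≤ r) {Dhat : Set V}
    (hdom : ∀ v ∈ L, Ghat.IsTotallyDominated r Dhat v) (x : V') :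
    (G').IsTotallyDominated r (liftDom L r Dhat) x := by
  have hb : (.inl (.inr 0) : V') ∈ liftDom L r Dhat := src7_mem_liftDom Dhat (.inr 0)
  have ha₁ : (.inl (.inr 1) : V') ∈ liftDom L r Dhat := src7_mem_liftDom Dhat (.inr 1)
  rcases x with (v | j) | ⟨p, i⟩
  · by_cases hv : v ∈ L
    · obtain ⟨d, hd, hdv, w, hw⟩ := hdom v hv
      exact ⟨.inl (.inl d), Set.mem_insert_of_mem _ (Set.mem_insert_of_mem _ ⟨d, hd, rfl⟩),
        by simpa using hdv, w.map addPathsHom, (Walk.length_map _ _).trans_le hw⟩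
    · obtain ⟨w, hw⟩ := exists_walk_along hr (.inl ⟨v, Finset.mem_compl.mpr hv⟩)
      exact ⟨_, hb, by simp, w, hw.le⟩
  · obtain ⟨w, hw⟩ := exists_walk_along (Ghat := Ghat) (L := L) hr (.inr 0)
    obtain ⟨w', hw'⟩ := exists_walk_along (Ghat := Ghat) (L := L) hr (.inr 1)
    fin_cases j
    · exact ⟨_, ha₁, by simp, w.reverse, w.length_reverse.trans_le hw.le⟩
    · exact ⟨_, hb, by simp, w, hw.le⟩
    · exact ⟨_, ha₁, by simp, w', hw'.le⟩
  · obtain ⟨w, hw⟩ :=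
      addPaths_exists_walk_src_internal (G := Ghat) (dst := dst7 L) (len := fun _ => r) p i
    exact ⟨_, src7_mem_liftDom Dhat p, by simp, w, by have := i.2; omega⟩

end TotalDominationKernel

/-- Let `G'` be obtained from `Ĝ` by adding new vertices `b, a₁, a₂`,
connecting `b` to every vertex of `O = V(Ĝ) ∖ L` by a path of length `r`, `b` to `a₁`
by a path of length `r`, and `a₁` to `a₂` by a path of length `r`. Then `G'` has a
total `r`-dominating set of size at most `k + 2` iff there is `D̂ ⊆ V(Ĝ)` of size at
most `k` such that every `v ∈ L` has some `d ∈ D̂` with `d ≠ v` within distance `r`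
of `v` in `Ĝ`. -/
theorem total_domination_kernel_back {V : Type*} [Fintype V] [DecidableEq V]
    (Ghat : SimpleGraph V) (L : Finset V) (r k : ℕ) (hr : 1 ≤ r) :
    (∃ D' : Set ((V ⊕ Fin 3) ⊕ (Σ _p : ({o : V // o ∈ Lᶜ} ⊕ Fin 2), Fin (r - 1))),
        D'.ncard ≤ k + 2 ∧
        ∀ x, ∃ d ∈ D', d ≠ x ∧
          ∃ w : (Ghat.addPaths (Fin 3) ({o : V // o ∈ Lᶜ} ⊕ Fin 2)
                  (src7 L) (dst7 L) (fun _ => r)).Walk d x, w.length ≤ r) ↔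
    (∃ Dhat : Set V, Dhat.ncard ≤ k ∧
        ∀ v ∈ L, ∃ d ∈ Dhat, d ≠ v ∧ ∃ w : Ghat.Walk d v, w.length ≤ r) :=
  ⟨fun ⟨_, hcard, hD⟩ => TotalDominationKernel.exists_dom_of_totalDom hcard hD,
    fun ⟨Dhat, hcard, hdom⟩ => ⟨_, (TotalDominationKernel.ncard_liftDom_le Dhat).trans (by omega),
      TotalDominationKernel.isTotallyDominated_liftDom hr hdom⟩⟩
end

section
/- Let G be a finite simple graph, r ≥ 1, u a vertex of G, and let G' be obtained from G by attaching to u a pendant path of 2r new vertices a₁, …, a₂ᵣ (with edges u a₁ and a_i a_{i+1} for 1 ≤ i < 2r). If D' ⊆ V(G') satisfies |N^r_{G'}[x] ∩ D'| = 1 for every vertex x of G' (i.e. D' is an r-perfect code of G'), then u ∉ D' and D' contains exactly one of the vertices a₁, …, a₂ᵣ, namely some a_j with r ≤ j ≤ 2r. -/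
/- Statement 10: `G'` is obtained from `G` by attaching to `u` a pendant path of `2r`
new vertices `a₁, …, a_{2r}`, realized as a path of length `2r` from `u` to a single
new end-vertex (`B = Unit`, the vertex `a_{2r}`), with internal vertices `a₁, …, a_{2r-1}`
indexed by `Fin (2r - 1)`. -/

/-- The vertex `a_j` (for `1 ≤ j ≤ 2r`) of the attached pendant path. -/
def pendantVertex {V : Type*} (r : ℕ) (j : ℕ) :
    (V ⊕ Unit) ⊕ (Σ _p : Unit, Fin (2 * r - 1)) :=
  if h : j - 1 < 2 * r - 1 then .inr ⟨(), ⟨j - 1, h⟩⟩ else .inl (.inr ())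

namespace SimpleGraph

variable {W : Type*} (H : SimpleGraph W)

def closedBall (x : W) (r : ℕ) : Set W :=
  {y | ∃ w : H.Walk y x, w.length ≤ r}

def IsPerfectCode (r : ℕ) (D : Set W) : Prop :=
  ∀ x, (H.closedBall x r ∩ D).ncard = 1

variable {H}

theorem IsPerfectCode.exists_mem_closedBall {r : ℕ} {D : Set W} (hD : H.IsPerfectCode r D)
    (x : W) : ∃ c ∈ D, c ∈ H.closedBall x r := by
  obtain ⟨c, hc⟩ := Set.ncard_eq_one.mp (hD x)
  obtain ⟨hcx, hcD⟩ : c ∈ H.closedBall x r ∩ D := hc ▸ rfl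
  exact ⟨c, hcD, hcx⟩

theorem IsPerfectCode.eq_of_mem_closedBall {r : ℕ} {D : Set W} (hD : H.IsPerfectCode r D)
    {x a b : W} (ha : a ∈ H.closedBall x r) (hb : b ∈ H.closedBall x r) (haD : a ∈ D)
    (hbD : b ∈ D) : a = b := by
  obtain ⟨c, hc⟩ := Set.ncard_eq_one.mp (hD x)
  have ha' : a ∈ H.closedBall x r ∩ D := ⟨ha, haD⟩
  have hb' : b ∈ H.closedBall x r ∩ D := ⟨hb, hbD⟩
  rw [hc, Set.mem_singleton_iff] at ha' hb'
  exact ha'.trans hb'.symm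

theorem Walk.le_add_length_of_adj {f : W → ℕ}
    (hf : ∀ ⦃x y⦄, H.Adj x y → f x ≤ f y + 1) {x y : W} (w : H.Walk x y) :
    f x ≤ f y + w.length := by
  induction w with
  | nil => simp
  | cons h _ ih =>
    have := hf h
    rw [Walk.length_cons]
    omega

theorem exists_walk_length_eq_sub {g : ℕ → W} {n : ℕ}
    (hg : ∀ i < n, H.Adj (g i) (g (i + 1))) {i j : ℕ} (hij : i ≤ j) (hjn : j ≤ n) :
    ∃ w : H.Walk (g i) (g j), w.length = j - i := by
  induction j, hij using Nat.le_induction with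
  | base => exact ⟨.nil, by simp⟩
  | succ j hij ih =>
    obtain ⟨w, hw⟩ := ih (by omega)
    exact ⟨w.concat (hg j (by omega)), by rw [Walk.length_concat, hw]; omega⟩

theorem mem_closedBall_of_adj_succ {g : ℕ → W} {n r : ℕ}
    (hg : ∀ i < n, H.Adj (g i) (g (i + 1))) {i j : ℕ} (hin : i ≤ n) (hjn : j ≤ n)
    (hij : i ≤ j + r) (hji : j ≤ i + r) : g i ∈ H.closedBall (g j) r := by
  rcases le_total i j with h | h
  · obtain ⟨w, hw⟩ := exists_walk_length_eq_sub hg h hjn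
    exact ⟨w, by omega⟩
  · obtain ⟨w, hw⟩ := exists_walk_length_eq_sub hg h hin
    exact ⟨w.reverse, by rw [Walk.length_reverse]; omega⟩

end SimpleGraph

namespace PendantPath

open SimpleGraph

variable {V : Type*} (r : ℕ)

abbrev Vert (V : Type*) (r : ℕ) : Type _ := (V ⊕ Unit) ⊕ (Σ _p : Unit, Fin (2 * r - 1))

abbrev graph (G : SimpleGraph V) (u : V) : SimpleGraph (Vert V r) :=
  G.addPaths Unit Unit (fun _ => .inl u) (fun _ => .inr ()) (fun _ => 2 * r)

def index : Vert V r → ℕ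
  | .inl (.inl _) => 0
  | .inl (.inr _) => 2 * r
  | .inr ⟨_, i⟩ => (i : ℕ) + 1

def vertex (u : V) (j : ℕ) : Vert V r :=
  if j = 0 then .inl (.inl u) else pendantVertex r j

variable {r} (u : V)

theorem vertex_of_pos_of_lt {j : ℕ} (h0 : 0 < j) (hj : j < 2 * r) :
    vertex r u j = .inr ⟨(), ⟨j - 1, by omega⟩⟩ := by
  rw [vertex, if_neg (by omega), pendantVertex, dif_pos (by omega)]

theorem vertex_two_mul (hr : 1 ≤ r) : vertex r u (2 * r) = .inl (.inr ()) := by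
  rw [vertex, if_neg (by omega), pendantVertex, dif_neg (by omega)]

theorem vertex_of_pos {j : ℕ} (h : 0 < j) : vertex r u j = pendantVertex r j :=
  if_neg (by omega)

theorem index_vertex (hr : 1 ≤ r) {j : ℕ} (hj : j ≤ 2 * r) : index r (vertex r u j) = j := by
  rcases Nat.eq_zero_or_pos j with rfl | h0
  · rfl
  rcases hj.lt_or_eq with hj | rfl
  · rw [vertex_of_pos_of_lt u h0 hj]
    show j - 1 + 1 = j
    omega
  · rw [vertex_two_mul u hr, index]

theorem vertex_index {x : Vert V r} (hx : 0 < index r x) : vertex r u (index r x) = x := by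
  match x with
  | .inl (.inl _) => simp [index] at hx
  | .inl (.inr ()) => exact vertex_two_mul u (by simp only [index] at hx; omega)
  | .inr ⟨(), i⟩ =>
    rw [index, vertex_of_pos_of_lt u (by omega) (by omega)]
    simp

theorem index_le (x : Vert V r) : index r x ≤ 2 * r := by
  match x with
  | .inl (.inl _) | .inl (.inr _) => simp [index]
  | .inr ⟨_, i⟩ => simp only [index]; omega

theorem vertex_injOn (hr : 1 ≤ r) : Set.InjOn (vertex r u) (Set.Iic (2 * r)) :=
  fun i hi j hj h => by rw [← index_vertex u hr hi, ← index_vertex u hr hj, h]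

variable (G : SimpleGraph V)

theorem index_le_index_add_one_of_adj ⦃x y : Vert V r⦄ (h : (graph r G u).Adj x y) :
    index r x ≤ index r y + 1 := by
  obtain ⟨-, h | h⟩ := (fromRel_adj _ x y).mp h <;>
  · rcases h with ⟨_, _, -, rfl, rfl⟩ | ⟨_, hp, rfl, rfl⟩ | ⟨_, i, hi, rfl, rfl⟩ |
      ⟨_, i, j, hij, rfl, rfl⟩ | ⟨_, i, hi, rfl, rfl⟩ <;>
    simp only [index] <;> beta_reduce at * <;> omega

theorem adj_vertex_succ (hr : 1 ≤ r) :
    ∀ i < 2 * r, (graph r G u).Adj (vertex r u i) (vertex r u (i + 1)) := by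
  intro i hi
  refine (fromRel_adj _ _ _).mpr
    ⟨(vertex_injOn u hr).ne (show i ≤ 2 * r by omega) (show i + 1 ≤ 2 * r by omega)
      (by omega), Or.inl ?_⟩
  rcases Nat.eq_zero_or_pos i with rfl | hpos
  · exact Or.inr <| Or.inr <| Or.inl ⟨(), ⟨0, by show 0 < 2 * r - 1; omega⟩, rfl, rfl,
      vertex_of_pos_of_lt u (by omega) (by omega)⟩
  rcases Nat.lt_or_ge (i + 1) (2 * r) with hlt | hge
  · exact Or.inr <| Or.inr <| Or.inr <| Or.inl ⟨(),
      ⟨i - 1, by show i - 1 < 2 * r - 1; omega⟩, ⟨i, by show i < 2 * r - 1; omega⟩,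
      by show i - 1 + 1 = i; omega,
      vertex_of_pos_of_lt u hpos hi, vertex_of_pos_of_lt u (by omega) hlt⟩
  · obtain rfl : i = 2 * r - 1 := by omega
    exact Or.inr <| Or.inr <| Or.inr <| Or.inr ⟨(),
      ⟨2 * r - 2, by show 2 * r - 2 < 2 * r - 1; omega⟩, by show 2 * r - 2 + 2 = 2 * r; omega,
      by rw [vertex_of_pos_of_lt u hpos hi]; simp; omega,
      by rw [show 2 * r - 1 + 1 = 2 * r by omega]; exact vertex_two_mul u hr⟩

end PendantPath

open SimpleGraph PendantPath in
theorem perfect_code_pendant_path_general {V : Type*}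
    (G : SimpleGraph V) (r : ℕ) (hr : 1 ≤ r) (u : V)
    (D' : Set ((V ⊕ Unit) ⊕ (Σ _p : Unit, Fin (2 * r - 1))))
    (hD' : ∀ x, ({y | ∃ w : (G.addPaths Unit Unit (fun _ => .inl u) (fun _ => .inr ())
        (fun _ => 2 * r)).Walk y x, w.length ≤ r} ∩ D').ncard = 1) :
    (Sum.inl (Sum.inl u) : (V ⊕ Unit) ⊕ (Σ _p : Unit, Fin (2 * r - 1))) ∉ D' ∧
    (∃! j : ℕ, (1 ≤ j ∧ j ≤ 2 * r) ∧ pendantVertex (V := V) r j ∈ D') ∧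
    (∀ j : ℕ, 1 ≤ j → j ≤ 2 * r → pendantVertex (V := V) r j ∈ D' → r ≤ j) := by
  have hcode : (graph r G u).IsPerfectCode r D' := hD'
  have hpath := adj_vertex_succ u G hr
  obtain ⟨c, hcD, w, hw⟩ := hcode.exists_mem_closedBall (vertex r u (2 * r))
  have hrc : r ≤ index r c := by
    have := w.reverse.le_add_length_of_adj (index_le_index_add_one_of_adj u G)
    rw [index_vertex u hr le_rfl, Walk.length_reverse] at this
    omega
  set j := index r c
  have hj : j ≤ 2 * r := index_le c
  have hjD : vertex r u j ∈ D' := by rwa [vertex_index u (by omega)]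
  have unique : ∀ i ≤ 2 * r, vertex r u i ∈ D' → i = j := fun i hi hiD =>
    vertex_injOn u hr hi hj <| hcode.eq_of_mem_closedBall
      (mem_closedBall_of_adj_succ hpath (j := (i + j) / 2) hi (by omega) (by omega) (by omega))
      (mem_closedBall_of_adj_succ hpath hj (by omega) (by omega) (by omega)) hiD hjD
  refine ⟨fun hu => ?_, ⟨j, ⟨⟨by omega, hj⟩, ?_⟩, fun i hi => ?_⟩,
    fun i h1 h2 hiD => ?_⟩
  · have := unique 0 (Nat.zero_le _) hu
    omega
  · rwa [← vertex_of_pos u (by omega)]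
  · exact unique i hi.1.2 (by rw [vertex_of_pos u hi.1.1]; exact hi.2)
  · have := unique i h2 (by rw [vertex_of_pos u h1]; exact hiD)
    omega

/-- If `G'` is obtained from `G` by attaching a pendant path
`a₁, …, a_{2r}` to the vertex `u` and `D'` is an `r`-perfect code of `G'`, then
`u ∉ D'` and `D'` contains exactly one of `a₁, …, a_{2r}`, namely some `a_j` with
`r ≤ j ≤ 2r`. -/
theorem perfect_code_pendant_path {V : Type*} [Fintype V]
    (G : SimpleGraph V) (r : ℕ) (hr : 1 ≤ r) (u : V)
    (D' : Set ((V ⊕ Unit) ⊕ (Σ _p : Unit, Fin (2 * r - 1))))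
    (hD' : ∀ x, ({y | ∃ w : (G.addPaths Unit Unit (fun _ => .inl u) (fun _ => .inr ())
        (fun _ => 2 * r)).Walk y x, w.length ≤ r} ∩ D').ncard = 1) :
    (Sum.inl (Sum.inl u) : (V ⊕ Unit) ⊕ (Σ _p : Unit, Fin (2 * r - 1))) ∉ D' ∧
    (∃! j : ℕ, (1 ≤ j ∧ j ≤ 2 * r) ∧ pendantVertex (V := V) r j ∈ D') ∧
    (∀ j : ℕ, 1 ≤ j → j ≤ 2 * r → pendantVertex (V := V) r j ∈ D' → r ≤ j) :=
  perfect_code_pendant_path_general G r hr u D' hD'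
end

section
/- Let G be a finite simple graph, U ⊆ V(G), r a natural number, and let Ĝ be an induced subgraph of G with U ⊆ V(Ĝ) such that for all u, v ∈ U and all d ≤ r, u is within distance d of v in G if and only if u is within distance d of v in Ĝ. If x ∈ V(G) ∖ U and x' ∈ V(Ĝ) ∖ U satisfy π^r_{G,U}[x] = π^r_{Ĝ,U}[x'], then N^r_G[x] ∩ U = N^r_{Ĝ}[x'] ∩ U; in particular |N^r_G[x] ∩ I| = |N^r_{Ĝ}[x'] ∩ I| for every set I ⊆ U. -/
/-!
Cut a walk of length at most `r` from `x` to `v ∈ U` at its first vertex `u ∈ U`. The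
initial segment avoids `U`, so its length bounds `π[x](u)`; equal profiles then give a walk
from `x'` to `u` in `Ĝ` that is no longer, and the final segment, which joins two vertices
of `U`, can be replaced by a walk in `Ĝ` that is no longer by the distance hypothesis.
The reverse inclusion is the same argument with `G` and `Ĝ` swapped, where the final
segment can be kept as it is.
-/

/-- The closed `d`-neighbourhood of `v` in the subgraph of `G` induced on `S`:
vertices reachable from `v` by a walk of length at most `d` all of whose vertices lie
in `S`.  With `S = Set.univ` this is the closed `d`-neighbourhood in `G` itself. -/
def ballIn {V : Type*} (G : SimpleGraph V) (S : Set V) (d : ℕ) (v : V) : Set V :=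
  {u : V | ∃ w : G.Walk u v, w.length ≤ d ∧ ∀ x ∈ w.support, x ∈ S}

/-- The `r`-projection profile `π^r_{H,X}[u]` evaluated at `v`, where `H` is the
subgraph of `G` induced on `S`: the minimum length of an `X`-avoiding walk from `u`
to `v` inside `S` if that minimum is at most `r`, and `∞` otherwise.  (`X`-avoiding
means no internal vertex lies in `X`.)  With `S = Set.univ` this is the profile in
`G` itself. -/
noncomputable def profileIn {V : Type*} (G : SimpleGraph V) (S X : Set V) (r : ℕ)
    (u v : V) : ℕ∞ :=
  let d := sInf {n : ℕ∞ | ∃ w : G.Walk u v, (∀ x ∈ w.support, x ∈ S) ∧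
    (∀ x ∈ w.support.tail.dropLast, x ∉ X) ∧ (w.length : ℕ∞) = n}
  if d ≤ (r : ℕ∞) then d else ⊤

namespace SimpleGraph.Walk

variable {V : Type*} {G : SimpleGraph V}

theorem exists_append_eq_of_first_mem (U : Set V) {x v : V} (w : G.Walk x v)
    (hx : x ∉ U) (hv : v ∈ U) :
    ∃ u ∈ U, ∃ (p : G.Walk x u) (q : G.Walk u v), p.append q = w ∧
      ∀ y ∈ p.support.tail.dropLast, y ∉ U := by
  induction w with
  | nil => exact absurd hv hx
  | @cons a b c hab w ih =>
    by_cases hb : b ∈ U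
    · exact ⟨b, hb, .cons hab .nil, w, rfl, by simp⟩
    obtain ⟨u, hu, p, q, rfl, hp⟩ := ih hb hv
    refine ⟨u, hu, .cons hab p, q, rfl, fun y hy => ?_⟩
    cases p with
    | nil => simp at hy
    | cons h p' =>
      rw [support_cons, support_cons, List.tail_cons,
        List.dropLast_cons_of_ne_nil p'.support_ne_nil, List.mem_cons] at hy
      rcases hy with rfl | hy
      · exact hb
      · exact hp y (by simpa using hy)

end SimpleGraph.Walk

section

variable {V : Type*} {G : SimpleGraph V}

theorem mem_ballIn_comm {S : Set V} {d : ℕ} {u v : V} :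
    u ∈ ballIn G S d v ↔ v ∈ ballIn G S d u := by
  constructor <;> rintro ⟨w, hl, hS⟩ <;>
    exact ⟨w.reverse, by simpa using hl, by simpa using hS⟩

theorem mem_ballIn_univ {d : ℕ} {u v : V} :
    u ∈ ballIn G Set.univ d v ↔ ∃ w : G.Walk u v, w.length ≤ d := by
  simp [ballIn]

theorem ballIn_mono {S T : Set V} {d e : ℕ} (hST : S ⊆ T) (hde : d ≤ e) (v : V) :
    ballIn G S d v ⊆ ballIn G T e v :=
  fun _ ⟨w, hl, hS⟩ => ⟨w, hl.trans hde, fun y hy => hST (hS y hy)⟩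

theorem mem_ballIn_append {S : Set V} {d e : ℕ} {x u v : V} (hxu : u ∈ ballIn G S d x)
    (huv : v ∈ ballIn G S e u) : v ∈ ballIn G S (d + e) x := by
  obtain ⟨p, hpl, hpS⟩ := hxu
  obtain ⟨q, hql, hqS⟩ := huv
  refine ⟨q.append p, by rw [q.length_append p]; omega, fun y hy => ?_⟩
  rcases List.mem_append.mp (q.support_append p ▸ hy) with hy | hy
  · exact hqS y hy
  · exact hpS y (List.mem_of_mem_tail hy)

def avoidingWalkLengths (G : SimpleGraph V) (S X : Set V) (u v : V) : Set ℕ∞ :=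
  {n | ∃ w : G.Walk u v, (∀ y ∈ w.support, y ∈ S) ∧
    (∀ y ∈ w.support.tail.dropLast, y ∉ X) ∧ (w.length : ℕ∞) = n}

theorem profileIn_eq_ite (S X : Set V) (r : ℕ) (u v : V) :
    profileIn G S X r u v =
      if sInf (avoidingWalkLengths G S X u v) ≤ r then sInf (avoidingWalkLengths G S X u v)
      else ⊤ :=
  rfl

theorem profileIn_le_length {S X : Set V} {r : ℕ} {u v : V} (w : G.Walk u v)
    (hS : ∀ y ∈ w.support, y ∈ S) (hX : ∀ y ∈ w.support.tail.dropLast, y ∉ X)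
    (hr : w.length ≤ r) : profileIn G S X r u v ≤ w.length := by
  have hinf : sInf (avoidingWalkLengths G S X u v) ≤ w.length := sInf_le ⟨w, hS, hX, rfl⟩
  rw [profileIn_eq_ite, if_pos (hinf.trans (by exact_mod_cast hr))]
  exact hinf

theorem exists_walk_length_eq_profileIn {S X : Set V} {r : ℕ} {u v : V}
    (h : profileIn G S X r u v ≤ r) :
    ∃ w : G.Walk u v, (∀ y ∈ w.support, y ∈ S) ∧
      (∀ y ∈ w.support.tail.dropLast, y ∉ X) ∧ (w.length : ℕ∞) = profileIn G S X r u v := by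
  rw [profileIn_eq_ite] at h ⊢
  split_ifs at h ⊢ with hd
  · have hne : (avoidingWalkLengths G S X u v).Nonempty :=
      Set.nonempty_iff_ne_empty.mpr fun he => by simp [he] at hd
    exact csInf_mem hne
  · simp at h

theorem ballIn_inter_subset_of_profileIn_le {U S T : Set V} {r : ℕ} {x x' : V} (hx : x ∉ U)
    (hball : ∀ u ∈ U, ∀ v ∈ U, ∀ d ≤ r, u ∈ ballIn G S d v → u ∈ ballIn G T d v)
    (hprof : ∀ u ∈ U, profileIn G T U r x' u ≤ profileIn G S U r x u) :
    ballIn G S r x ∩ U ⊆ ballIn G T r x' ∩ U := by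
  rintro v ⟨hv, hvU⟩
  obtain ⟨w, hwl, hwS⟩ := mem_ballIn_comm.mp hv
  obtain ⟨u, huU, p, q, rfl, hpU⟩ := w.exists_append_eq_of_first_mem U hx hvU
  rw [p.length_append q] at hwl
  have hpS : ∀ y ∈ p.support, y ∈ S := fun y hy =>
    hwS y (p.support_subset_support_append_left q hy)
  have hqS : ∀ y ∈ q.support, y ∈ S := fun y hy =>
    hwS y (p.support_subset_support_append_right q hy)
  have hprof_p : profileIn G T U r x' u ≤ p.length :=
    (hprof u huU).trans (profileIn_le_length p hpS hpU (by omega))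
  obtain ⟨p', hp'T, -, hp'l⟩ :=
    exists_walk_length_eq_profileIn (hprof_p.trans (by exact_mod_cast (by omega : p.length ≤ r)))
  have hx'u : u ∈ ballIn G T p.length x' :=
    mem_ballIn_comm.mp ⟨p', by exact_mod_cast hp'l.trans_le hprof_p, hp'T⟩
  have huv : v ∈ ballIn G T q.length u :=
    mem_ballIn_comm.mp (hball u huU v hvU q.length (by omega) ⟨q, le_rfl, hqS⟩)
  exact ⟨ballIn_mono subset_rfl hwl x' (mem_ballIn_append hx'u huv), hvU⟩

end

theorem equal_profiles_in_projection_kernel_general {V : Type*}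
    (G : SimpleGraph V) (U S : Set V) (r : ℕ)
    (h1 : ∀ u ∈ U, ∀ v ∈ U, ∀ d ≤ r,
      ((∃ w : G.Walk u v, w.length ≤ d) ↔
       (∃ w : G.Walk u v, w.length ≤ d ∧ ∀ x ∈ w.support, x ∈ S)))
    (x x' : V) (hx : x ∉ U) (hx' : x' ∉ U)
    (hprof : ∀ v ∈ U, profileIn G Set.univ U r x v = profileIn G S U r x' v) :
    ballIn G Set.univ r x ∩ U = ballIn G S r x' ∩ U ∧
    ∀ I : Set V, I ⊆ U →
      (ballIn G Set.univ r x ∩ I).ncard = (ballIn G S r x' ∩ I).ncard := by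
  have hball : ballIn G Set.univ r x ∩ U = ballIn G S r x' ∩ U := by
    refine (ballIn_inter_subset_of_profileIn_le hx ?_ fun u hu => (hprof u hu).ge).antisymm
      (ballIn_inter_subset_of_profileIn_le hx' ?_ fun u hu => (hprof u hu).le)
    · exact fun u hu v hv d hd huv => (h1 u hu v hv d hd).mp (mem_ballIn_univ.mp huv)
    · exact fun u _ v _ d _ huv => ballIn_mono (Set.subset_univ S) le_rfl v huv
  refine ⟨hball, fun I hI => ?_⟩
  rw [← Set.inter_eq_self_of_subset_right hI, ← Set.inter_assoc, ← Set.inter_assoc, hball]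

/-- Let `Ĝ` be the subgraph of `G` induced on `S ⊇ U` preserving
distances up to `r` between vertices of `U`.  If `x ∈ V(G) ∖ U` and
`x' ∈ V(Ĝ) ∖ U` have `π^r_{G,U}[x] = π^r_{Ĝ,U}[x']`, then
`N^r_G[x] ∩ U = N^r_Ĝ[x'] ∩ U`; in particular
`|N^r_G[x] ∩ I| = |N^r_Ĝ[x'] ∩ I|` for every `I ⊆ U`. -/
theorem equal_profiles_in_projection_kernel {V : Type*} [Fintype V]
    (G : SimpleGraph V) (U S : Set V) (r : ℕ) (hUS : U ⊆ S)
    (h1 : ∀ u ∈ U, ∀ v ∈ U, ∀ d ≤ r,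
      ((∃ w : G.Walk u v, w.length ≤ d) ↔
       (∃ w : G.Walk u v, w.length ≤ d ∧ ∀ x ∈ w.support, x ∈ S)))
    (x x' : V) (hx : x ∉ U) (hx'S : x' ∈ S) (hx' : x' ∉ U)
    (hprof : ∀ v ∈ U, profileIn G Set.univ U r x v = profileIn G S U r x' v) :
    ballIn G Set.univ r x ∩ U = ballIn G S r x' ∩ U ∧
    ∀ I : Set V, I ⊆ U →
      (ballIn G Set.univ r x ∩ I).ncard = (ballIn G S r x' ∩ I).ncard :=
  equal_profiles_in_projection_kernel_general G U S r h1 x x' hx hx' hprof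
end

section
/- Let Ĝ be a finite simple graph, K ⊆ V(Ĝ), O = V(Ĝ) ∖ K, r ≥ 1 and m ≥ 1 natural numbers, and set σ = m·(2r+1). Let G' be obtained from Ĝ by attaching to every vertex v ∈ O a pendant path of σ−1 new vertices. Then the minimum size of an r-dominating set of G' equals m·|O| plus the minimum size of a set D ⊆ V(Ĝ) with N^r_{Ĝ}[v] ∩ D ≠ ∅ for every v ∈ K. -/
/-- Graph obtained from `G` by attaching to every vertex `v` of `O` a pendant path of
`ℓ` new vertices: a path of length `ℓ` from `v` to a fresh end-vertex (`B = ↥O`),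
with `ℓ - 1` fresh internal vertices. -/
def SimpleGraph.attachPendants {V : Type*} [Fintype V] [DecidableEq V]
    (G : SimpleGraph V) (O : Finset V) (ℓ : ℕ) :
    SimpleGraph ((V ⊕ {o : V // o ∈ O}) ⊕ (Σ _p : {o : V // o ∈ O}, Fin (ℓ - 1))) :=
  G.addPaths {o : V // o ∈ O} {o : V // o ∈ O} (fun o => .inl o.1) (fun o => .inr o)
    (fun _ => ℓ)

open Finset

lemma SimpleGraph.Walk.le_add_length_of_adj_s15 {W : Type*} {H : SimpleGraph W} {f : W → ℕ}
    (hf : ∀ ⦃a b⦄, H.Adj a b → f a ≤ f b + 1) {x y : W} (w : H.Walk x y) :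
    f x ≤ f y + w.length := by
  induction w with
  | nil => simp
  | cons h _ ih => have := hf h; simp only [SimpleGraph.Walk.length_cons]; omega

lemma Finset.le_card_filter_lt_of_forall_exists_mem_Ioc {α : Type*} (s : Finset α)
    (f : α → ℕ) {t k m : ℕ}
    (h : ∀ j < m, ∃ a ∈ s, f a ∈ Set.Ioc (t + k * j) (t + k * j + k)) :
    m ≤ #(s.filter fun a => t < f a) := by
  have hsurj : Set.SurjOn (fun a => (f a - t - 1) / k) (s.filter fun a => t < f a) (range m) := by
    intro j hj
    obtain ⟨a, ha, hlo, hhi⟩ := h j (mem_range.1 hj)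
    refine ⟨a, mem_filter.2 ⟨ha, by omega⟩, Nat.div_eq_of_lt_le ?_ ?_⟩
    · rw [mul_comm]; omega
    · rw [add_mul, one_mul, mul_comm]; omega
  simpa using card_le_card_of_surjOn _ hsurj

lemma Nat.sInf_eq_add_sInf {A B : Set ℕ} {c : ℕ} (hA : A.Nonempty) (hB : B.Nonempty)
    (hAB : ∀ b ∈ B, ∃ a ∈ A, a ≤ c + b) (hBA : ∀ a ∈ A, ∃ b ∈ B, c + b ≤ a) :
    sInf A = c + sInf B := by
  obtain ⟨a, ha, hle⟩ := hAB _ (Nat.sInf_mem hB)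
  obtain ⟨b, hb, hge⟩ := hBA _ (Nat.sInf_mem hA)
  have := Nat.sInf_le ha
  have := Nat.sInf_le hb
  omega

abbrev PendantVert {V : Type*} (O : Finset V) (ℓ : ℕ) : Type _ :=
  (V ⊕ {o : V // o ∈ O}) ⊕ (Σ _p : {o : V // o ∈ O}, Fin (ℓ - 1))

namespace PendantVert

variable {V : Type*} {O : Finset V} {ℓ : ℕ}

def base : PendantVert O ℓ → V
  | .inl (.inl u) => u
  | .inl (.inr o) => o
  | .inr ⟨o, _⟩ => o

def height : PendantVert O ℓ → ℕ
  | .inl (.inl _) => 0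
  | .inl (.inr _) => ℓ
  | .inr ⟨_, i⟩ => i + 1

def owner : PendantVert O ℓ → Option {o : V // o ∈ O}
  | .inl (.inl _) => none
  | .inl (.inr o) => some o
  | .inr ⟨o, _⟩ => some o

/-- The vertex at distance `d ≤ ℓ` from `o` on the pendant path of `o`. -/
def pathVert (o : {o : V // o ∈ O}) (d : ℕ) : PendantVert O ℓ :=
  if _ : d = 0 then .inl (.inl o)
  else if _ : d < ℓ then .inr ⟨o, ⟨d - 1, by omega⟩⟩
  else .inl (.inr o)

lemma height_le (z : PendantVert O ℓ) : height z ≤ ℓ := by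
  rcases z with (_ | _) | ⟨_, i⟩
  · exact Nat.zero_le _
  · exact le_rfl
  · have := i.2; show (i : ℕ) + 1 ≤ ℓ; omega

lemma pathVert_succ (o : {o : V // o ∈ O}) (i : Fin (ℓ - 1)) :
    (pathVert o (i + 1) : PendantVert O ℓ) = .inr ⟨o, i⟩ := by
  simp only [pathVert, Nat.add_one_ne_zero, dif_pos (show (i : ℕ) + 1 < ℓ by omega)]
  rfl

lemma pathVert_self (hℓ : 1 ≤ ℓ) (o : {o : V // o ∈ O}) :
    (pathVert o ℓ : PendantVert O ℓ) = .inl (.inr o) := by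
  simp [pathVert]; omega

@[simp] lemma base_pathVert (o : {o : V // o ∈ O}) (d : ℕ) :
    base (pathVert o d : PendantVert O ℓ) = o := by
  unfold pathVert; split_ifs <;> rfl

lemma height_pathVert (o : {o : V // o ∈ O}) {d : ℕ} (hd : d ≤ ℓ) :
    height (pathVert o d : PendantVert O ℓ) = d := by
  unfold pathVert; split_ifs <;> simp only [height] <;> omega

lemma owner_pathVert (o : {o : V // o ∈ O}) {d : ℕ} (hd : 0 < d) :
    owner (pathVert o d : PendantVert O ℓ) = some o := by
  unfold pathVert; split_ifs <;> first | omega | rfl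

lemma eq_inl_inl_of_owner_eq_none {z : PendantVert O ℓ} (hz : owner z = none) :
    z = .inl (.inl (base z)) := by
  rcases z with (_ | _) | ⟨_, _⟩ <;> simp_all [owner, base]

lemma eq_pathVert_of_owner_eq_some (hℓ : 1 ≤ ℓ) {z : PendantVert O ℓ} {o : {o : V // o ∈ O}}
    (hz : owner z = some o) : z = pathVert o (height z) ∧ 0 < height z := by
  rcases z with (_ | o') | ⟨o', i⟩ <;> simp only [owner, Option.some.injEq, reduceCtorEq] at hz
  · subst hz; exact ⟨(pathVert_self hℓ o').symm, hℓ⟩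
  · subst hz; exact ⟨(pathVert_succ o' i).symm, Nat.succ_pos _⟩

lemma pathVert_ne_succ {o : {o : V // o ∈ O}} {d : ℕ} (hd : d < ℓ) :
    (pathVert o d : PendantVert O ℓ) ≠ pathVert o (d + 1) := fun h => by
  have := congrArg height h
  rw [height_pathVert o hd.le, height_pathVert o hd] at this
  omega

variable [DecidableEq V]

def pathHeight (o : {o : V // o ∈ O}) (z : PendantVert O ℓ) : ℕ :=
  if owner z = some o then height z else 0

lemma pathHeight_pathVert (o o' : {o : V // o ∈ O}) {d : ℕ} (hd : d ≤ ℓ) :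
    pathHeight o' (pathVert o d : PendantVert O ℓ) = if o = o' then d else 0 := by
  rcases Nat.eq_zero_or_pos d with rfl | hd0
  · simp [pathHeight, owner, pathVert]
  · simp [pathHeight, owner_pathVert o hd0, height_pathVert o hd]

lemma owner_eq_some_of_pathHeight_pos {o : {o : V // o ∈ O}} {z : PendantVert O ℓ}
    (hz : 0 < pathHeight o z) : owner z = some o := by
  by_contra h
  simp [pathHeight, h] at hz

def nearBase (T : Finset (PendantVert O ℓ)) (r : ℕ) : Finset {o : V // o ∈ O} :=
  univ.filter fun o => ∃ z ∈ T, 0 < pathHeight o z ∧ pathHeight o z < r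

def baseTrace (T : Finset (PendantVert O ℓ)) (r : ℕ) : Finset V :=
  (T.filter (owner · = none)).image base ∪ (nearBase T r).image Subtype.val

end PendantVert

namespace SimpleGraph

open PendantVert

variable {V : Type*} [Fintype V] [DecidableEq V] {G : SimpleGraph V} {O : Finset V} {ℓ m r : ℕ}

lemma attachPendants_adj_pathVert_succ (o : {o : V // o ∈ O}) {d : ℕ} (hd : d < ℓ) :
    (G.attachPendants O ℓ).Adj (pathVert o d) (pathVert o (d + 1)) := by
  refine (fromRel_adj _ _ _).2 ⟨pathVert_ne_succ hd, Or.inl ?_⟩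
  beta_reduce
  rcases Nat.eq_zero_or_pos d with rfl | hd0
  · rcases Nat.lt_or_ge 1 ℓ with hℓ | hℓ
    · exact Or.inr (Or.inr (Or.inl ⟨o, ⟨0, by omega⟩, rfl, rfl, pathVert_succ o ⟨0, _⟩⟩))
    · refine Or.inr (Or.inl ⟨o, by omega, rfl, ?_⟩)
      rw [show 0 + 1 = ℓ by omega, pathVert_self (by omega)]
  · obtain ⟨i, rfl⟩ := Nat.exists_eq_add_of_lt hd0
    rw [zero_add, pathVert_succ o ⟨i, by omega⟩]
    rcases Nat.lt_or_ge (i + 2) ℓ with hℓ | hℓ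
    · exact Or.inr (Or.inr (Or.inr (Or.inl ⟨o, _, ⟨i + 1, by omega⟩, rfl, rfl,
        pathVert_succ o ⟨i + 1, _⟩⟩)))
    · exact Or.inr (Or.inr (Or.inr (Or.inr ⟨o, _, by simp; omega, rfl,
        by rw [show i + 1 + 1 = ℓ by omega, pathVert_self (by omega)]⟩)))

lemma attachPendants_adj_iff {x y : PendantVert O ℓ} :
    (G.attachPendants O ℓ).Adj x y ↔
      (∃ u w, G.Adj u w ∧ x = .inl (.inl u) ∧ y = .inl (.inl w)) ∨
      ∃ o d, d < ℓ ∧ (x = pathVert o d ∧ y = pathVert o (d + 1) ∨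
        x = pathVert o (d + 1) ∧ y = pathVert o d) := by
  rw [attachPendants, addPaths, fromRel_adj]
  constructor
  · rintro ⟨-, h | h⟩ <;>
    rcases h with ⟨u, w, huw, rfl, rfl⟩ | ⟨o, hℓ, rfl, rfl⟩ | ⟨o, i, hi, rfl, rfl⟩ |
      ⟨o, i, j, hij, rfl, rfl⟩ | ⟨o, i, hi, rfl, rfl⟩
    · exact Or.inl ⟨u, w, huw, rfl, rfl⟩
    · refine Or.inr ⟨o, 0, by omega, Or.inl ⟨rfl, ?_⟩⟩
      subst hℓ; exact (pathVert_self le_rfl o).symm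
    · refine Or.inr ⟨o, 0, by omega, Or.inl ⟨rfl, ?_⟩⟩
      rw [← pathVert_succ, hi]
    · refine Or.inr ⟨o, i + 1, by omega, Or.inl ⟨(pathVert_succ o i).symm, ?_⟩⟩
      rw [← pathVert_succ, hij]
    · refine Or.inr ⟨o, i + 1, by omega, Or.inl ⟨(pathVert_succ o i).symm, ?_⟩⟩
      rw [show (i : ℕ) + 1 + 1 = ℓ by omega, pathVert_self (by omega)]
    · exact Or.inl ⟨w, u, huw.symm, rfl, rfl⟩
    · refine Or.inr ⟨o, 0, by omega, Or.inr ⟨?_, rfl⟩⟩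
      subst hℓ; exact (pathVert_self le_rfl o).symm
    · refine Or.inr ⟨o, 0, by omega, Or.inr ⟨?_, rfl⟩⟩
      rw [← pathVert_succ, hi]
    · refine Or.inr ⟨o, i + 1, by omega, Or.inr ⟨?_, (pathVert_succ o i).symm⟩⟩
      rw [← pathVert_succ, hij]
    · refine Or.inr ⟨o, i + 1, by omega, Or.inr ⟨?_, (pathVert_succ o i).symm⟩⟩
      rw [show (i : ℕ) + 1 + 1 = ℓ by omega, pathVert_self (by omega)]
  · rintro (⟨u, w, huw, rfl, rfl⟩ | ⟨o, d, hd, ⟨rfl, rfl⟩ | ⟨rfl, rfl⟩⟩)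
    · exact ⟨by simpa using huw.ne, Or.inl (Or.inl ⟨u, w, huw, rfl, rfl⟩)⟩
    · exact attachPendants_adj_pathVert_succ o hd
    · exact (attachPendants_adj_pathVert_succ o hd).symm

def attachPendantsHom (G : SimpleGraph V) (O : Finset V) (ℓ : ℕ) :
    G →g G.attachPendants O ℓ where
  toFun u := .inl (.inl u)
  map_rel' huw := attachPendants_adj_iff.2 (Or.inl ⟨_, _, huw, rfl, rfl⟩)

lemma exists_walk_pathVert (o : {o : V // o ∈ O}) {a b : ℕ} (hab : a ≤ b) (hb : b ≤ ℓ) :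
    ∃ w : (G.attachPendants O ℓ).Walk (pathVert o a) (pathVert o b), w.length = b - a := by
  induction b, hab using Nat.le_induction with
  | base => exact ⟨.nil, by simp⟩
  | succ b hab ih =>
    obtain ⟨w, hw⟩ := ih (by omega)
    exact ⟨w.concat (attachPendants_adj_pathVert_succ o (by omega)), by simp [hw]; omega⟩

lemma base_eq_or_adj_of_attachPendants_adj {x y : PendantVert O ℓ}
    (h : (G.attachPendants O ℓ).Adj x y) :
    (base x = base y ∧ height x ≤ height y + 1) ∨ (G.Adj (base x) (base y) ∧ height x = 0) := by
  rcases attachPendants_adj_iff.1 h with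
    ⟨u, w, huw, rfl, rfl⟩ | ⟨o, d, hd, ⟨rfl, rfl⟩ | ⟨rfl, rfl⟩⟩
  · exact Or.inr ⟨huw, rfl⟩
  all_goals
    left
    simp only [base_pathVert, height_pathVert o hd.le, height_pathVert o hd, true_and]
    omega

lemma pathHeight_le_of_adj (o : {o : V // o ∈ O}) {x y : PendantVert O ℓ}
    (h : (G.attachPendants O ℓ).Adj x y) : pathHeight o x ≤ pathHeight o y + 1 := by
  rcases attachPendants_adj_iff.1 h with
    ⟨u, w, huw, rfl, rfl⟩ | ⟨o', d, hd, ⟨rfl, rfl⟩ | ⟨rfl, rfl⟩⟩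
  · simp [pathHeight, owner]
  all_goals
    simp only [pathHeight_pathVert o' o hd.le, pathHeight_pathVert o' o hd]
    split_ifs <;> omega

lemma exists_walk_base_of_walk {x y : PendantVert O ℓ} (w : (G.attachPendants O ℓ).Walk x y) :
    ∃ q : G.Walk (base x) (base y), q.length + height x ≤ w.length + height y := by
  induction w with
  | nil => exact ⟨.nil, by simp⟩
  | cons h w ih =>
    obtain ⟨q, hq⟩ := ih
    rcases base_eq_or_adj_of_attachPendants_adj h with ⟨hb, hh⟩ | ⟨hadj, hh⟩
    · exact ⟨q.copy hb.symm rfl, by simp only [Walk.length_copy, Walk.length_cons]; omega⟩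
    · exact ⟨.cons hadj q, by simp only [Walk.length_cons]; omega⟩

lemma exists_walk_from_pathVert_r_add_mul (hℓ : ℓ + 1 = m * (2 * r + 1)) (o : {o : V // o ∈ O})
    {t : ℕ} (ht : t ≤ ℓ) : ∃ j < m, ∃ w : (G.attachPendants O ℓ).Walk
      (pathVert o (r + (2 * r + 1) * j)) (pathVert o t), w.length ≤ r := by
  set j := t / (2 * r + 1)
  have ht_eq : (2 * r + 1) * j + t % (2 * r + 1) = t := Nat.div_add_mod t (2 * r + 1)
  have ht_mod : t % (2 * r + 1) < 2 * r + 1 := Nat.mod_lt _ (by omega)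
  have hj : j < m := by
    rw [Nat.div_lt_iff_lt_mul (by omega)]
    omega
  have hjm : (2 * r + 1) * j + (2 * r + 1) ≤ m * (2 * r + 1) := by nlinarith
  refine ⟨j, hj, ?_⟩
  rcases le_total t (r + (2 * r + 1) * j) with hle | hle
  · obtain ⟨w, hw⟩ := exists_walk_pathVert (G := G) (ℓ := ℓ) o hle (by omega)
    exact ⟨w.reverse, by rw [Walk.length_reverse, hw]; omega⟩
  · obtain ⟨w, hw⟩ := exists_walk_pathVert (G := G) o hle ht
    exact ⟨w, by omega⟩

lemma exists_dominating_attachPendants (hℓ₁ : 1 ≤ ℓ) (hℓ : ℓ + 1 = m * (2 * r + 1))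
    {D : Finset V} (hD : ∀ v ∉ O, ∃ d ∈ D, ∃ w : G.Walk d v, w.length ≤ r) :
    ∃ D' : Finset (PendantVert O ℓ),
      (∀ x, ∃ d ∈ D', ∃ w : (G.attachPendants O ℓ).Walk d x, w.length ≤ r) ∧
      #D' ≤ #D + m * #O := by
  set P : Finset (PendantVert O ℓ) :=
    univ.image fun p : {o // o ∈ O} × Fin m => pathVert p.1 (r + (2 * r + 1) * p.2)
  have hP (o : {o // o ∈ O}) {t : ℕ} (ht : t ≤ ℓ) :
      ∃ d ∈ P, ∃ w : (G.attachPendants O ℓ).Walk d (pathVert o t), w.length ≤ r := by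
    obtain ⟨j, hj, w, hw⟩ := exists_walk_from_pathVert_r_add_mul (G := G) hℓ o ht
    exact ⟨_, mem_image_of_mem _ (mem_univ (o, ⟨j, hj⟩)), w, hw⟩
  refine ⟨D.image (G.attachPendantsHom O ℓ) ∪ P, fun x => ?_, ?_⟩
  · rcases hx : owner x with _ | o
    · rw [eq_inl_inl_of_owner_eq_none hx]
      by_cases hxO : base x ∈ O
      · obtain ⟨d, hd, w⟩ := hP ⟨base x, hxO⟩ (Nat.zero_le ℓ)
        exact ⟨d, mem_union_right _ hd, w⟩
      · obtain ⟨d, hd, w, hw⟩ := hD _ hxO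
        exact ⟨_, mem_union_left _ (mem_image_of_mem _ hd), w.map (G.attachPendantsHom O ℓ),
          (Walk.length_map _ _).trans_le hw⟩
    · rw [(eq_pathVert_of_owner_eq_some hℓ₁ hx).1]
      obtain ⟨d, hd, w⟩ := hP o (height_le x)
      exact ⟨d, mem_union_right _ hd, w⟩
  · calc #(D.image (G.attachPendantsHom O ℓ) ∪ P) ≤ #D + #P :=
          (card_union_le _ _).trans (Nat.add_le_add_right card_image_le _)
      _ ≤ #D + m * #O := by
          grw [card_image_le]
          simp [mul_comm]

lemma le_card_filter_lt_pathHeight (hℓ : ℓ + 1 = m * (2 * r + 1))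
    {T : Finset (PendantVert O ℓ)}
    (hT : ∀ x, ∃ d ∈ T, ∃ w : (G.attachPendants O ℓ).Walk d x, w.length ≤ r)
    (o : {o // o ∈ O}) {t : ℕ} (ht : t < r) :
    m ≤ #(T.filter fun z => t < pathHeight o z) := by
  refine le_card_filter_lt_of_forall_exists_mem_Ioc T _ (k := 2 * r + 1) fun j hj => ?_
  have hjm : (2 * r + 1) * j + (2 * r + 1) ≤ m * (2 * r + 1) := by nlinarith
  have he : t + r + 1 + (2 * r + 1) * j ≤ ℓ := by omega
  obtain ⟨d, hd, w, hw⟩ := hT (pathVert o (t + r + 1 + (2 * r + 1) * j))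
  have hlip := Walk.le_add_length_of_adj_s15 (fun _ _ => pathHeight_le_of_adj o) w
  have hlip' := Walk.le_add_length_of_adj_s15 (fun _ _ => pathHeight_le_of_adj o) w.reverse
  rw [Walk.length_reverse] at hlip'
  rw [pathHeight_pathVert o o he, if_pos rfl] at hlip hlip'
  exact ⟨d, hd, by omega, by omega⟩

lemma add_ite_le_card_filter_owner (hr : 1 ≤ r) (hℓ : ℓ + 1 = m * (2 * r + 1))
    {T : Finset (PendantVert O ℓ)}
    (hT : ∀ x, ∃ d ∈ T, ∃ w : (G.attachPendants O ℓ).Walk d x, w.length ≤ r)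
    (o : {o // o ∈ O}) :
    m + (if o ∈ nearBase T r then 1 else 0) ≤ #(T.filter (owner · = some o)) := by
  have hsub (t : ℕ) : T.filter (fun z => t < pathHeight o z) ⊆ T.filter (owner · = some o) :=
    monotone_filter_right _ fun _ _ hz => owner_eq_some_of_pathHeight_pos (by omega)
  split_ifs with hnear
  · obtain ⟨z₀, hz₀, hpos, hlt⟩ := (mem_filter.1 hnear).2
    have hz₀_notMem : z₀ ∉ T.filter (fun z => pathHeight o z₀ < pathHeight o z) := by simp
    calc m + 1 ≤ #(T.filter fun z => pathHeight o z₀ < pathHeight o z) + 1 :=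
          Nat.add_le_add_right (le_card_filter_lt_pathHeight hℓ hT o hlt) 1
      _ = #(insert z₀ (T.filter fun z => pathHeight o z₀ < pathHeight o z)) :=
          (card_insert_of_notMem hz₀_notMem).symm
      _ ≤ _ := card_le_card (insert_subset
          (mem_filter.2 ⟨hz₀, owner_eq_some_of_pathHeight_pos hpos⟩) (hsub _))
  · exact (le_card_filter_lt_pathHeight hℓ hT o hr).trans (card_le_card (hsub 0))

lemma mul_card_add_card_baseTrace_le (hr : 1 ≤ r) (hℓ : ℓ + 1 = m * (2 * r + 1))
    {T : Finset (PendantVert O ℓ)}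
    (hT : ∀ x, ∃ d ∈ T, ∃ w : (G.attachPendants O ℓ).Walk d x, w.length ≤ r) :
    m * #O + #(baseTrace T r) ≤ #T := by
  calc m * #O + #(baseTrace T r)
      ≤ m * #O + (#(T.filter (owner · = none)) + #(nearBase T r)) :=
        Nat.add_le_add_left ((card_union_le _ _).trans (add_le_add card_image_le card_image_le)) _
    _ = #(T.filter (owner · = none)) + ∑ o, (m + if o ∈ nearBase T r then 1 else 0) := by
        rw [sum_add_distrib, sum_const, sum_boole, card_univ, Fintype.card_coe,
          filter_mem_eq_inter, univ_inter, smul_eq_mul, Nat.cast_id]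
        ring
    _ ≤ #(T.filter (owner · = none)) + ∑ o, #(T.filter (owner · = some o)) :=
        Nat.add_le_add_left (sum_le_sum fun o _ => add_ite_le_card_filter_owner hr hℓ hT o) _
    _ = #T := by
        rw [card_eq_sum_card_fiberwise (s := T) (f := owner) (t := univ) (by simp),
          Fintype.sum_option]

lemma baseTrace_dominates (hℓ₁ : 1 ≤ ℓ) {T : Finset (PendantVert O ℓ)}
    (hT : ∀ x, ∃ d ∈ T, ∃ w : (G.attachPendants O ℓ).Walk d x, w.length ≤ r) :
    ∀ v ∉ O, ∃ d ∈ baseTrace T r, ∃ w : G.Walk d v, w.length ≤ r := by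
  intro v hv
  obtain ⟨d, hd, w, hw⟩ := hT (.inl (.inl v))
  obtain ⟨q, hq⟩ : ∃ q : G.Walk (base d) v, q.length + height d ≤ w.length :=
    exists_walk_base_of_walk w
  refine ⟨base d, ?_, q, by omega⟩
  rcases hown : owner d with _ | o
  · exact mem_union_left _ (mem_image_of_mem _ (mem_filter.2 ⟨hd, hown⟩))
  · obtain ⟨hd_eq, hpos⟩ := eq_pathVert_of_owner_eq_some hℓ₁ hown
    have hbase : base d = o := by rw [hd_eq, base_pathVert]
    have hlt : height d < r := by
      by_contra! hge
      have : base d = v := q.eq_of_length_eq_zero (by omega)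
      exact hv (this ▸ hbase ▸ o.2)
    have hph : pathHeight o d = height d := by simp [pathHeight, hown]
    refine mem_union_right _ (mem_image.2 ⟨o, mem_filter.2 ⟨mem_univ _, d, hd, ?_⟩, hbase.symm⟩)
    omega

end SimpleGraph

open SimpleGraph PendantVert in
/-- Let `σ = m·(2r+1)` and let `G'` be obtained from `Ĝ` by attaching
to every vertex of `O = V(Ĝ) ∖ K` a pendant path of `σ − 1` new vertices.  Then the
minimum size of an `r`-dominating set of `G'` equals `m·|O|` plus the minimum size of
a set `D ⊆ V(Ĝ)` that `r`-dominates `K` in `Ĝ`. -/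
theorem domination_multikernel_paths {V : Type*} [Fintype V] [DecidableEq V]
    (Ghat : SimpleGraph V) (K : Finset V) (r m : ℕ) (hr : 1 ≤ r) (hm : 1 ≤ m) :
    sInf {n : ℕ |
        ∃ D' : Set ((V ⊕ {o : V // o ∈ Kᶜ}) ⊕
            (Σ _p : {o : V // o ∈ Kᶜ}, Fin (m * (2 * r + 1) - 1 - 1))),
          (∀ x, ∃ d ∈ D',
            ∃ w : (Ghat.attachPendants Kᶜ (m * (2 * r + 1) - 1)).Walk d x,
              w.length ≤ r) ∧ D'.ncard = n}
      = m * Kᶜ.card +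
        sInf {n : ℕ | ∃ D : Set V,
          (∀ v ∈ K, ∃ d ∈ D, ∃ w : Ghat.Walk d v, w.length ≤ r) ∧ D.ncard = n} := by
  classical
  have hσ : 3 ≤ m * (2 * r + 1) := by nlinarith
  have hℓ : m * (2 * r + 1) - 1 + 1 = m * (2 * r + 1) := by omega
  have hℓ₁ : 1 ≤ m * (2 * r + 1) - 1 := by omega
  refine Nat.sInf_eq_add_sInf ⟨_, Set.univ, fun x => ⟨x, trivial, .nil, by simp⟩, rfl⟩
    ⟨_, Set.univ, fun v _ => ⟨v, trivial, .nil, by simp⟩, rfl⟩ ?_ ?_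
  · rintro _ ⟨D, hD, rfl⟩
    obtain ⟨D', hD', hcard⟩ := exists_dominating_attachPendants (G := Ghat) (O := Kᶜ) hℓ₁ hℓ
      (D := D.toFinset) fun v hv => by simpa using hD v (by simpa using hv)
    refine ⟨_, ⟨D', hD', rfl⟩, ?_⟩
    rw [Set.ncard_coe_finset, Set.ncard_eq_toFinset_card']
    omega
  · rintro _ ⟨D', hD', rfl⟩
    have hT : ∀ x, ∃ d ∈ D'.toFinset, ∃ w : (Ghat.attachPendants Kᶜ _).Walk d x,
        w.length ≤ r := by simpa using hD'
    refine ⟨_, ⟨baseTrace D'.toFinset r,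
      fun v hv => baseTrace_dominates hℓ₁ hT v (by simpa using hv), rfl⟩, ?_⟩
    rw [Set.ncard_coe_finset, Set.ncard_eq_toFinset_card']
    exact mul_card_add_card_baseTrace_le hr hℓ hT
end
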